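/- The equivalence classes of 2-process affine models are exactly the five classes: for any two 2-process affine tasks A on n = 3^ℓ and B on m = 3^{ℓ'} (ℓ, ℓ' ≥ 1), the models A* and B* solve each other's tasks (B* solves A and A* solves B) if and only if class(A) = class(B). -/

import Mathlib

/-!
2-process affine tasks, modeled combinatorially.
The ℓ-th iterated standard chromatic subdivision of the 1-simplex is the path
graph on vertices `{0, …, n}`, `n = 3^ℓ`, whose edges are the pairs `{i, i+1}`
for `0 ≤ i < n`; vertex `i` has color `i % 2`, vertex `0` is the solo vertex of
process `p₀` and vertex `n` the solo vertex of `p₁`.  An edge `{i, i+1}` is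
encoded by its left endpoint `i`, and a 2-process affine task on `n` is a
nonempty finite set `A : Finset ℕ` of such edges (left endpoints `< n`).
-/

/-- `StepRel A x y`: the vertices `x` and `y` are joined by an edge of `A`
(the edge `{i, i+1}` being encoded by its left endpoint `i`). -/
def StepRel (A : Finset ℕ) (x y : ℕ) : Prop :=
  (y = x + 1 ∧ x ∈ A) ∨ (x = y + 1 ∧ y ∈ A)

/-- `P₁(A)`: the vertices `0` and `n` are joined by a path all of whose edges
lie in `A`. -/
def P1 (n : ℕ) (A : Finset ℕ) : Prop := Relation.ReflTransGen (StepRel A) 0 n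

/-- `P₂(A)`: the edge `{0, 1}` belongs to `A`. -/
def P2 (A : Finset ℕ) : Prop := 0 ∈ A

/-- `P₃(A)`: the edge `{n-1, n}` belongs to `A`. -/
def P3 (n : ℕ) (A : Finset ℕ) : Prop := n - 1 ∈ A

open Classical in
/-- The class of a 2-process affine task `A` on `{0,…,n}`:
`1` if `P₁(A)`; `2` if `¬P₁ ∧ P₂ ∧ P₃`; `3` if `¬P₁ ∧ P₂ ∧ ¬P₃`;
`4` if `¬P₁ ∧ ¬P₂ ∧ P₃`; `5` if `¬P₁ ∧ ¬P₂ ∧ ¬P₃`. -/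
noncomputable def classOf (n : ℕ) (A : Finset ℕ) : ℕ :=
  if P1 n A then 1
  else if P2 A then (if P3 n A then 2 else 3)
  else (if P3 n A then 4 else 5)

/-- The class order `⊑` on `{1, …, 5}`: `c ⊑ c'` iff `c = c'`, or `c = 1`,
or `c' = 5`, or (`c = 2` and `c' ∈ {3, 4}`). -/
def ClassLE (c c' : ℕ) : Prop :=
  c = c' ∨ c = 1 ∨ c' = 5 ∨ (c = 2 ∧ (c' = 3 ∨ c' = 4))

/-- The composition `A ⋆ B` of a task `A` on `{0,…,n}` with a task `B` on
`{0,…,m}`: each edge of `A` is replaced by an appropriately oriented copy of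
`B`; its edges are `{i·m + r, i·m + r + 1}` for `{i, i+1} ∈ A` and
`{j, j+1} ∈ B`, where `r = j` if `i` is even and `r = m - 1 - j` if `i` is odd
(edges encoded by left endpoints). -/
def comp (m : ℕ) (A B : Finset ℕ) : Finset ℕ :=
  (A ×ˢ B).image fun p => p.1 * m + (if Even p.1 then p.2 else m - 1 - p.2)

/-- `iterTask n A k` is the iterate `A^{⋆k}` (for `k ≥ 1`) of a task `A` on
`{0,…,n}`, a task on `{0,…,n^k}`: `A^{⋆1} = A`, `A^{⋆(k+1)} = A^{⋆k} ⋆ A`.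
(The value at `k = 0` is irrelevant and set to `A`.) -/
def iterTask (n : ℕ) (A : Finset ℕ) : ℕ → Finset ℕ
  | 0 => A
  | 1 => A
  | k + 2 => comp n (iterTask n A (k + 1)) A

/-- A chromatic carrier-preserving simplicial map `δ` from a task `A` on
`{0,…,n}` to the subdivided 1-simplex on `{0,…,m}`: `δ` maps `{0,…,n}` to
`{0,…,m}`; `δ i ≡ i (mod 2)` for every vertex incident to an edge of `A`;
`|δ (i+1) - δ i| = 1` for every edge `{i, i+1} ∈ A`; `δ 0 = 0` whenever
`{0,1} ∈ A`; and `δ n = m` whenever `{n-1, n} ∈ A`. -/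
def IsCCMap (n m : ℕ) (A : Finset ℕ) (δ : ℕ → ℕ) : Prop :=
  (∀ i ≤ n, δ i ≤ m) ∧
  (∀ i ∈ A, δ i % 2 = i % 2 ∧ δ (i + 1) % 2 = (i + 1) % 2) ∧
  (∀ i ∈ A, δ (i + 1) = δ i + 1 ∨ δ i = δ (i + 1) + 1) ∧
  (0 ∈ A → δ 0 = 0) ∧
  (n - 1 ∈ A → δ n = m)

/-- The image task `δ(A) = { {δ i, δ (i+1)} : {i, i+1} ∈ A }`
(edges encoded by left endpoints, i.e. by `min (δ i) (δ (i+1))`). -/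
def imageTask (A : Finset ℕ) (δ : ℕ → ℕ) : Finset ℕ :=
  A.image fun i => min (δ i) (δ (i + 1))

/-- `Solves m n B A`: the affine model `B*` of a task `B` on `{0,…,m}` solves
the task `A` on `{0,…,n}`, i.e. there exist `k ≥ 1` and a chromatic
carrier-preserving simplicial map `δ` from `B^{⋆k}` (a task on `{0,…,m^k}`)
to the subdivided 1-simplex on `{0,…,n}` with `δ(B^{⋆k}) ⊆ A`. -/
def Solves (m n : ℕ) (B A : Finset ℕ) : Prop :=
  ∃ k, 1 ≤ k ∧ ∃ δ : ℕ → ℕ,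
    IsCCMap (m ^ k) n (iterTask m B k) δ ∧ imageTask (iterTask m B k) δ ⊆ A

/-!
A carrier-preserving simplicial map sends walks to walks and fixes the solo vertices, so each of
`P₁`, `P₂`, `P₃` passes from `B^{⋆k}` to any task it maps into; since the iterates `B^{⋆k}`
inherit `P₁`, `P₂`, `P₃` from `B`, mutual solvability forces equal classes. Conversely, if
`P₁(A)` then a long enough iterate of `B` is mapped by climbing from `0` to `n` and then
oscillating on the last edge; otherwise `B` is folded, preserving colors, onto the edge `{0, 1}`,
the edge `{n-1, n}`, or any edge of `A`, and when both end edges are required `B` is split at one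
of its missing edges.
-/

lemma p1_iff_forall_lt_mem (n : ℕ) (A : Finset ℕ) : P1 n A ↔ ∀ i < n, i ∈ A := by
  constructor
  · intro h
    induction h with
    | refl => intro i hi; omega
    | @tail b _ _ hstep ih =>
      rcases hstep with ⟨rfl, hb⟩ | ⟨rfl, -⟩
      · intro i hi
        rcases Nat.lt_or_ge i b with h | h
        · exact ih i h
        · rwa [show i = b by omega]
      · exact fun i hi => ih i (by omega)
  · intro h
    suffices ∀ t ≤ n, Relation.ReflTransGen (StepRel A) 0 t from this n le_rfl
    intro t
    induction t with
    | zero => exact fun _ => .refl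
    | succ t ih => exact fun ht => .tail (ih (by omega)) (Or.inl ⟨rfl, h t (by omega)⟩)

section Composition

variable {m n : ℕ} {A B : Finset ℕ}

lemma mem_comp_of_mem {i j : ℕ} (hi : i ∈ A) (hj : j ∈ B) :
    i * m + (if Even i then j else m - 1 - j) ∈ comp m A B :=
  Finset.mem_image.2 ⟨(i, j), Finset.mem_product.2 ⟨hi, hj⟩, rfl⟩

lemma zero_mem_comp (hA : 0 ∈ A) (hB : 0 ∈ B) : 0 ∈ comp m A B := by
  simpa using mem_comp_of_mem (m := m) hA hB

lemma mul_sub_one_mem_comp (hn : Odd n) (hA : n - 1 ∈ A) (hB : m - 1 ∈ B) :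
    n * m - 1 ∈ comp m A B := by
  have hev : Even (n - 1) := by obtain ⟨c, rfl⟩ := hn; simp
  convert mem_comp_of_mem hA hB using 1
  rw [if_pos hev, Nat.sub_one_mul]
  rcases m with _ | m
  · simp
  · have : m + 1 ≤ n * (m + 1) := Nat.le_mul_of_pos_left _ hn.pos
    omega

lemma forall_lt_mem_comp (hA : ∀ i < n, i ∈ A) (hB : ∀ j < m, j ∈ B) :
    ∀ t < n * m, t ∈ comp m A B := by
  intro t ht
  have hm : 0 < m := Nat.pos_of_ne_zero (by rintro rfl; simp at ht)
  have hq : t / m < n := (Nat.div_lt_iff_lt_mul hm).2 ht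
  have hr : t % m < m := Nat.mod_lt t hm
  by_cases he : Even (t / m)
  · convert mem_comp_of_mem (hA _ hq) (hB _ hr) using 1
    rw [if_pos he, Nat.div_add_mod']
  · convert mem_comp_of_mem (hA _ hq) (hB (m - 1 - t % m) (by omega)) using 1
    rw [if_neg he, show m - 1 - (m - 1 - t % m) = t % m by omega, Nat.div_add_mod']

end Composition

section Iterate

variable {m : ℕ} {B : Finset ℕ}

lemma iterTask_succ {k : ℕ} (hk : 1 ≤ k) :
    iterTask m B (k + 1) = comp m (iterTask m B k) B := by
  cases k with
  | zero => omega
  | succ k => rfl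

lemma p1_iterTask (hB : P1 m B) {k : ℕ} (hk : 1 ≤ k) :
    P1 (m ^ k) (iterTask m B k) := by
  rw [p1_iff_forall_lt_mem] at hB ⊢
  induction k, hk using Nat.le_induction with
  | base => rw [pow_one]; exact hB
  | succ k hk ih => rw [iterTask_succ hk, pow_succ]; exact forall_lt_mem_comp ih hB

lemma p2_iterTask (hB : P2 B) : ∀ k, P2 (iterTask m B k)
  | 0 | 1 => hB
  | k + 2 => zero_mem_comp (p2_iterTask hB (k + 1)) hB

lemma p3_iterTask (hm : Odd m) (hB : P3 m B) {k : ℕ} (hk : 1 ≤ k) :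
    P3 (m ^ k) (iterTask m B k) := by
  induction k, hk using Nat.le_induction with
  | base => rw [pow_one]; exact hB
  | succ k hk ih =>
    rw [P3, iterTask_succ hk, pow_succ]
    exact mul_sub_one_mem_comp hm.pow ih hB

end Iterate

namespace IsCCMap

variable {M n : ℕ} {C A : Finset ℕ} {δ : ℕ → ℕ}

lemma stepRel_succ (hδ : IsCCMap M n C δ) (himg : imageTask C δ ⊆ A) {i : ℕ} (hi : i ∈ C) :
    StepRel A (δ i) (δ (i + 1)) := by
  have hmem : min (δ i) (δ (i + 1)) ∈ A := himg (Finset.mem_image_of_mem _ hi)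
  rcases hδ.2.2.1 i hi with h | h
  · exact Or.inl ⟨h, by rwa [min_eq_left (by omega)] at hmem⟩
  · exact Or.inr ⟨h, by rwa [min_eq_right (by omega)] at hmem⟩

lemma stepRel (hδ : IsCCMap M n C δ) (himg : imageTask C δ ⊆ A) {i j : ℕ}
    (h : StepRel C i j) : StepRel A (δ i) (δ j) := by
  rcases h with ⟨rfl, hi⟩ | ⟨rfl, hj⟩
  · exact hδ.stepRel_succ himg hi
  · exact (hδ.stepRel_succ himg hj).symm

lemma p1 (hδ : IsCCMap M n C δ) (himg : imageTask C δ ⊆ A) (hM : 0 < M) (hC : P1 M C) :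
    P1 n A := by
  have hfull := (p1_iff_forall_lt_mem M C).1 hC
  have hwalk : Relation.ReflTransGen (StepRel A) (δ 0) (δ M) := hC.lift δ fun _ _ => hδ.stepRel himg
  rwa [hδ.2.2.2.1 (hfull 0 hM), hδ.2.2.2.2 (hfull (M - 1) (by omega))] at hwalk

lemma p2 (hδ : IsCCMap M n C δ) (himg : imageTask C δ ⊆ A) (hC : P2 C) : P2 A := by
  have h0 : δ 0 = 0 := hδ.2.2.2.1 hC
  rcases hδ.stepRel_succ himg hC with ⟨-, hA⟩ | ⟨h, -⟩
  · rwa [h0] at hA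
  · omega

lemma p3 (hδ : IsCCMap M n C δ) (himg : imageTask C δ ⊆ A) (hM : 0 < M) (hC : P3 M C) :
    P3 n A := by
  have hle : δ (M - 1) ≤ n := hδ.1 (M - 1) (Nat.sub_le M 1)
  have hstep := hδ.stepRel_succ himg hC
  rw [Nat.sub_add_cancel hM, hδ.2.2.2.2 hC] at hstep
  rcases hstep with ⟨h, hA⟩ | ⟨h, -⟩
  · rwa [P3, h, Nat.add_sub_cancel]
  · omega

end IsCCMap

section Solvability

variable {m n : ℕ} {A B : Finset ℕ}

lemma Solves.imp_p1_p2_p3 (hm : Odd m) (h : Solves m n B A) :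
    (P1 m B → P1 n A) ∧ (P2 B → P2 A) ∧ (P3 m B → P3 n A) := by
  obtain ⟨k, hk, δ, hδ, himg⟩ := h
  have hM : 0 < m ^ k := pow_pos hm.pos k
  exact ⟨fun hB => hδ.p1 himg hM (p1_iterTask hB hk),
    fun hB => hδ.p2 himg (p2_iterTask hB k), fun hB => hδ.p3 himg hM (p3_iterTask hm hB hk)⟩

lemma classOf_eq_iff :
    classOf n A = classOf m B ↔
      ((P1 n A ↔ P1 m B) ∧ (¬ P1 n A → ((P2 A ↔ P2 B) ∧ (P3 n A ↔ P3 m B)))) := by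
  by_cases h1 : P1 n A <;> by_cases h1' : P1 m B <;>
    by_cases h2 : P2 A <;> by_cases h2' : P2 B <;>
      by_cases h3 : P3 n A <;> by_cases h3' : P3 m B <;>
        simp [classOf, h1, h1', h2, h2', h3, h3']

lemma solves_of_isCCMap {δ : ℕ → ℕ} (hδ : IsCCMap m n B δ) (himg : imageTask B δ ⊆ A) :
    Solves m n B A :=
  ⟨1, le_rfl, δ, by rwa [pow_one], himg⟩

def ramp (n i : ℕ) : ℕ := if i ≤ n then i else n - (i - n) % 2

lemma solves_of_p1 (hm : Odd m) (hm1 : 1 < m) (hn : Odd n) (hA : P1 n A) : Solves m n B A := by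
  have hfull := (p1_iff_forall_lt_mem n A).1 hA
  have hle (i : ℕ) : ramp n i ≤ n := by unfold ramp; split_ifs <;> omega
  have hpar (i : ℕ) : ramp n i % 2 = i % 2 := by
    obtain ⟨c, rfl⟩ := hn; unfold ramp; split_ifs <;> omega
  have hstep (i : ℕ) : ramp n (i + 1) = ramp n i + 1 ∨ ramp n i = ramp n (i + 1) + 1 := by
    have := hn.pos; unfold ramp; split_ifs <;> omega
  have htop : ramp n (m ^ n) = n := by
    have hlt : n < m ^ n := Nat.lt_pow_self hm1
    obtain ⟨a, ha⟩ := hm.pow (n := n)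
    obtain ⟨b, rfl⟩ := hn
    unfold ramp; rw [if_neg (by omega)]; omega
  refine ⟨n, hn.pos, ramp n, ⟨fun i _ => hle i, fun i _ => ⟨hpar i, hpar (i + 1)⟩,
    fun i _ => hstep i, fun _ => by simp [ramp], fun _ => htop⟩, ?_⟩
  intro x hx
  obtain ⟨i, -, rfl⟩ := Finset.mem_image.1 hx
  have := hle i; have := hle (i + 1); have := hstep i
  exact hfull _ (by omega)

/-- The vertex of color `i % 2` on the edge `{e, e+1}`. -/
def foldTo (e i : ℕ) : ℕ := e + (e + i) % 2

lemma foldTo_sub_one (hn : Odd n) (hm : Odd m) : foldTo (n - 1) m = n := by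
  obtain ⟨a, rfl⟩ := hn; obtain ⟨b, rfl⟩ := hm; unfold foldTo; omega

/-- `i ↦ foldTo (E i) i` sends each edge `{i, i+1}` of `B` onto the edge `{E i, E i + 1}`. -/
lemma solves_of_foldTo {E : ℕ → ℕ} (hEn : ∀ i, E i < n)
    (hEB : ∀ i ∈ B, E (i + 1) = E i ∧ E i ∈ A) (h0 : P2 B → E 0 = 0)
    (htop : P3 m B → foldTo (E m) m = n) : Solves m n B A := by
  refine solves_of_isCCMap (δ := fun i => foldTo (E i) i) ⟨fun i _ => ?_, fun i hi => ?_,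
    fun i hi => ?_, fun hB => by simp [foldTo, h0 hB], htop⟩ ?_
  · have := hEn i; show foldTo (E i) i ≤ n; unfold foldTo; omega
  · simp only [foldTo, (hEB i hi).1]; omega
  · simp only [foldTo, (hEB i hi).1]; omega
  · intro x hx
    obtain ⟨i, hi, rfl⟩ := Finset.mem_image.1 hx
    obtain ⟨hE, hEA⟩ := hEB i hi
    simp only [foldTo, hE]
    rwa [show min (E i + (E i + i) % 2) (E i + (E i + (i + 1)) % 2) = E i by omega]

lemma solves_of_p2_of_p3 (hm : Odd m) (hn : Odd n) (hB : ¬ P1 m B) (hA2 : P2 A)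
    (hA3 : P3 n A) : Solves m n B A := by
  obtain ⟨g, hg, hgB⟩ : ∃ g < m, g ∉ B := by simpa [p1_iff_forall_lt_mem] using hB
  refine solves_of_foldTo (E := fun i => if i ≤ g then 0 else n - 1) (fun i => ?_)
    (fun i hi => ?_) (fun _ => if_pos (Nat.zero_le g)) (fun _ => ?_)
  · have := hn.pos; split_ifs <;> omega
  · rcases lt_or_gt_of_ne (show i ≠ g by rintro rfl; exact hgB hi) with h | h
    · rw [if_pos h.le, if_pos (show i + 1 ≤ g by omega)]; exact ⟨rfl, hA2⟩
    · rw [if_neg (show ¬ i ≤ g by omega), if_neg (show ¬ i + 1 ≤ g by omega)]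
      exact ⟨rfl, hA3⟩
  · simp only [if_neg (show ¬ m ≤ g by omega)]; exact foldTo_sub_one hn hm

lemma solves_of_p2 (hn : 0 < n) (hA2 : P2 A) (hB3 : ¬ P3 m B) : Solves m n B A :=
  solves_of_foldTo (E := fun _ => 0) (fun _ => hn) (fun _ _ => ⟨rfl, hA2⟩) (fun _ => rfl)
    (fun h => absurd h hB3)

lemma solves_of_p3 (hm : Odd m) (hn : Odd n) (hA3 : P3 n A) (hB2 : ¬ P2 B) :
    Solves m n B A :=
  solves_of_foldTo (E := fun _ => n - 1) (fun _ => Nat.sub_lt hn.pos one_pos)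
    (fun _ _ => ⟨rfl, hA3⟩) (fun h => absurd h hB2) (fun _ => foldTo_sub_one hn hm)

lemma solves_of_mem {e : ℕ} (he : e ∈ A) (hen : e < n) (hB2 : ¬ P2 B) (hB3 : ¬ P3 m B) :
    Solves m n B A :=
  solves_of_foldTo (E := fun _ => e) (fun _ => hen) (fun _ _ => ⟨rfl, he⟩)
    (fun h => absurd h hB2) (fun h => absurd h hB3)

lemma solves_of_classOf_eq (hm : Odd m) (hm1 : 1 < m) (hn : Odd n) (hAne : A.Nonempty)
    (hAlt : ∀ i ∈ A, i < n) (h : classOf n A = classOf m B) : Solves m n B A := by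
  obtain ⟨h1, h23⟩ := classOf_eq_iff.1 h
  by_cases hA1 : P1 n A
  · exact solves_of_p1 hm hm1 hn hA1
  obtain ⟨h2, h3⟩ := h23 hA1
  by_cases hA2 : P2 A <;> by_cases hA3 : P3 n A
  · exact solves_of_p2_of_p3 hm hn (mt h1.2 hA1) hA2 hA3
  · exact solves_of_p2 hn.pos hA2 (mt h3.2 hA3)
  · exact solves_of_p3 hm hn hA3 (mt h2.2 hA2)
  · obtain ⟨e, he⟩ := hAne
    exact solves_of_mem he (hAlt e he) (mt h2.2 hA2) (mt h3.2 hA3)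

end Solvability

/-- The equivalence classes of 2-process affine models are exactly the five
classes: the models `A*` and `B*` solve each other's tasks if and only if
`class(A) = class(B)`. -/
theorem equivalent_iff_same_class
    (ℓ ℓ' n m : ℕ) (hℓ : 1 ≤ ℓ) (hℓ' : 1 ≤ ℓ') (hn : n = 3 ^ ℓ) (hm : m = 3 ^ ℓ')
    (A B : Finset ℕ) (hAne : A.Nonempty) (hAlt : ∀ i ∈ A, i < n)
    (hBne : B.Nonempty) (hBlt : ∀ i ∈ B, i < m) :
    (Solves m n B A ∧ Solves n m A B) ↔ classOf n A = classOf m B := by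
  have hn_odd : Odd n := hn ▸ Odd.pow (by decide)
  have hm_odd : Odd m := hm ▸ Odd.pow (by decide)
  have hn1 : 1 < n := hn ▸ one_lt_pow' (by norm_num) (by omega)
  have hm1 : 1 < m := hm ▸ one_lt_pow' (by norm_num) (by omega)
  constructor
  · rintro ⟨hBA, hAB⟩
    obtain ⟨hBA1, hBA2, hBA3⟩ := hBA.imp_p1_p2_p3 hm_odd
    obtain ⟨hAB1, hAB2, hAB3⟩ := hAB.imp_p1_p2_p3 hn_odd
    exact classOf_eq_iff.2 ⟨⟨hAB1, hBA1⟩, fun _ => ⟨⟨hAB2, hBA2⟩, ⟨hAB3, hBA3⟩⟩⟩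
  · intro h
    exact ⟨solves_of_classOf_eq hm_odd hm1 hn_odd hAne hAlt h,
      solves_of_classOf_eq hn_odd hn1 hm_odd hBne hBlt h.symm⟩
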